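/- arXiv:1306.5117 — 9 statements merged into one kernel-verified Lean document; each statement's English description precedes it below -/
import Mathlib

section
/- Let X be a Hausdorff abelian topological group. Then X is a Š-space (every compact subset of X is sequentially compact) if and only if the group F₀(X) of X-valued null sequences with the uniform topology is a Š-space. -/
/-!
A compact subset of `F₀(X)` maps continuously and injectively, hence homeomorphically, into
the Hausdorff product `X^ℕ`, and in a countable product of Š-spaces every compact set is
sequentially compact by a diagonal extraction over the coordinates. Conversely, `x ↦ (x, 0, 0, …)`
embeds `X` into `F₀(X)`, and being a Š-space passes to subspaces.
-/

open Filter Topology Set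

/-- The group of `X`-valued null sequences. -/
def c0 (X : Type*) [AddCommGroup X] [TopologicalSpace X] [IsTopologicalAddGroup X] :
    AddSubgroup (ℕ → X) where
  carrier := {x : ℕ → X | Tendsto x atTop (𝓝 0)}
  zero_mem' := tendsto_const_nhds
  add_mem' := fun ha hb => by simpa [Pi.add_def] using ha.add hb
  neg_mem' := fun ha => by simpa [Pi.neg_def] using ha.neg

/-- The uniform topology on `c0 X`: induced by the topology of uniform convergence on `ℕ → X`,
where `X` carries its canonical group uniformity. -/
instance F0Topology (X : Type*) [AddCommGroup X] [TopologicalSpace X]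
    [IsTopologicalAddGroup X] : TopologicalSpace (c0 X) :=
  letI : UniformSpace X := IsTopologicalAddGroup.rightUniformSpace X
  TopologicalSpace.induced (fun x : c0 X => UniformFun.ofFun (x : ℕ → X)) inferInstance

/-- A topological space is a Š-space if every compact subset is sequentially compact. -/
def IsShSpace (Y : Type*) [TopologicalSpace Y] : Prop :=
  ∀ K : Set Y, IsCompact K → IsSeqCompact K

section ShSpace

variable {Y Z : Type*} [TopologicalSpace Y] [TopologicalSpace Z] {f : Y → Z}

theorem IsShSpace.of_isInducing (hf : IsInducing f) (hZ : IsShSpace Z) : IsShSpace Y :=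
  fun _ hK => hf.isSeqCompact_iff.2 (hZ _ (hK.image hf.continuous))

theorem IsShSpace.of_continuous_injective [T2Space Z] (hf : Continuous f)
    (hinj : Function.Injective f) (hZ : IsShSpace Z) : IsShSpace Y := by
  intro K hK
  have : CompactSpace K := isCompact_iff_compactSpace.mp hK
  have hemb : IsClosedEmbedding (K.domRestrict f) :=
    (hf.comp continuous_subtype_val).isClosedEmbedding (hinj.comp Subtype.val_injective)
  rw [isSeqCompact_iff_isSeqCompact_univ, hemb.isInducing.isSeqCompact_iff, image_univ,
    range_domRestrict]
  exact hZ _ (hK.image hf)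

end ShSpace

theorem Filter.Tendsto.comp_of_eventually_mem_image_Ici {α : Type*} {l : Filter α}
    {v : ℕ → α} {g φ : ℕ → ℕ} (hg : Tendsto (v ∘ g) atTop l)
    (hφ : ∀ᶠ k in atTop, φ k ∈ g '' Ici k) : Tendsto (v ∘ φ) atTop l := by
  refine tendsto_iff_forall_eventually_mem.2 fun U hU => ?_
  obtain ⟨J, hJ⟩ := eventually_atTop.1 (hg hU)
  filter_upwards [hφ, eventually_ge_atTop J] with k ⟨j, hkj, hj⟩ hJk
  simpa only [mem_preimage, Function.comp_apply, ← hj] using hJ j (hJk.trans hkj)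

theorem isSeqCompact_univ_pi {Z : ℕ → Type*} [∀ n, TopologicalSpace (Z n)]
    {K : ∀ n, Set (Z n)} (hK : ∀ n, IsSeqCompact (K n)) : IsSeqCompact (univ.pi K) := by
  intro u hu
  have hsub : ∀ n (σ : ℕ → ℕ), ∃ l ∈ K n, ∃ θ : ℕ → ℕ, StrictMono θ ∧
      Tendsto (fun k => u (σ (θ k)) n) atTop (𝓝 l) :=
    fun n σ => hK n fun k => hu (σ k) n (mem_univ n)
  choose l hlK θ hθ hl using hsub
  -- `ψ (n + 1)` is a subsequence of `ψ n` along which the `n`-th coordinate converges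
  let ψ : ℕ → ℕ → ℕ := fun n => Nat.rec id (fun m σ => σ ∘ θ m σ) n
  have hψ_mono : ∀ n, StrictMono (ψ n) := by
    intro n
    induction n with
    | zero => exact strictMono_id
    | succ m ih => exact ih.comp (hθ m (ψ m))
  have hψ_sub : ∀ n d j, ψ (n + d) j ∈ ψ n '' Ici j := by
    intro n d
    induction d with
    | zero => exact fun j => ⟨j, mem_Ici.2 le_rfl, rfl⟩
    | succ d ih =>
      intro j
      obtain ⟨i, hi, heq⟩ := ih (θ (n + d) (ψ (n + d)) j)
      exact ⟨i, (hθ _ _).le_apply.trans hi, heq⟩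
  refine ⟨fun n => l n (ψ n), fun n _ => hlK n (ψ n), fun k => ψ (k + 1) k, ?_, ?_⟩
  · refine strictMono_nat_of_lt_succ fun k => ?_
    calc ψ (k + 1) k < ψ (k + 1) (k + 1) := hψ_mono (k + 1) k.lt_succ_self
      _ ≤ ψ (k + 2) (k + 1) := (hψ_mono (k + 1)).monotone (hθ _ _).le_apply
  · refine tendsto_pi_nhds.2 fun n => ?_
    refine (hl n (ψ n)).comp_of_eventually_mem_image_Ici (v := fun j => u j n) ?_
    filter_upwards [eventually_ge_atTop n] with k hk
    obtain ⟨d, rfl⟩ := Nat.exists_eq_add_of_le hk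
    rw [Nat.add_right_comm n d 1]
    exact hψ_sub (n + 1) d (n + d)

theorem IsShSpace.pi_nat {Z : ℕ → Type*} [∀ n, TopologicalSpace (Z n)] [∀ n, T2Space (Z n)]
    (hZ : ∀ n, IsShSpace (Z n)) : IsShSpace (∀ n, Z n) := by
  intro K hK u hu
  obtain ⟨L, -, φ, hφ, hL⟩ :=
    isSeqCompact_univ_pi (fun n => hZ n _ (hK.image (continuous_apply n)))
      (x := u) fun k n _ => mem_image_of_mem _ (hu k)
  exact ⟨L, hK.isClosed.mem_of_tendsto hL (Eventually.of_forall fun k => hu (φ k)), φ, hφ, hL⟩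

namespace c0

variable {X : Type*} [AddCommGroup X] [TopologicalSpace X] [IsTopologicalAddGroup X]

theorem continuous_coe : Continuous (fun f : c0 X => (f : ℕ → X)) := by
  let : UniformSpace X := IsTopologicalAddGroup.rightUniformSpace X
  exact UniformFun.uniformContinuous_toFun.continuous.comp continuous_induced_dom

noncomputable def single (x : X) : c0 X :=
  ⟨Pi.single 0 x, tendsto_const_nhds.congr' <| by
    filter_upwards [eventually_ne_atTop 0] with n hn
    rw [Pi.single_eq_of_ne hn]⟩

theorem continuous_single : Continuous (single (X := X)) := by
  let : UniformSpace X := IsTopologicalAddGroup.rightUniformSpace X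
  refine continuous_induced_rng.2 (UniformContinuous.continuous ?_)
  rw [UniformContinuous, (UniformFun.hasBasis_uniformity ℕ X).tendsto_right_iff]
  intro V hV
  filter_upwards [hV] with p hp n
  by_cases hn : n = 0
  · subst hn
    simpa [UniformFun.gen, single] using hp
  · simpa [UniformFun.gen, single, hn] using refl_mem_uniformity hV

theorem isInducing_single : IsInducing (single (X := X)) :=
  .of_comp continuous_single ((continuous_apply 0).comp continuous_coe) IsInducing.id

end c0

/-- Let `X` be a Hausdorff abelian topological group. Then `X` is a Š-space (every compact
subset of `X` is sequentially compact) if and only if the group `F₀(X)` of `X`-valued null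
sequences with the uniform topology is a Š-space. -/
theorem shSpace_iff_shSpace_c0 (X : Type*) [AddCommGroup X] [TopologicalSpace X]
    [IsTopologicalAddGroup X] [T2Space X] :
    IsShSpace X ↔ IsShSpace (c0 X) :=
  ⟨fun hX => .of_continuous_injective c0.continuous_coe Subtype.val_injective
      (.pi_nat fun _ => hX),
    fun h => .of_isInducing c0.isInducing_single h⟩
end

section
/- Let E be an infinite subset of a topological group X. Then either E is left precompact (for every neighborhood U of the identity there is a finite set F ⊆ X with E ⊆ F·U), or E contains a countably infinite left uniformly discrete subset. -/
open Filter Function Topology Set Pointwise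

/-! If `E` is not left precompact, some neighbourhood `U` of `1` admits no finite `F` with
`E ⊆ F * U`. Take `W ∈ 𝓝 1` with `W / W ⊆ U`: a point of `E` outside `F * U` has its
`W`-translate disjoint from those of all points of `F`, so adding such points one at a time
yields an infinite left `W`-separated sequence in `E`. -/

theorem disjoint_smul_set_smul_set_iff {G : Type*} [Group G] {x y : G} {W : Set G} :
    Disjoint (x • W) (y • W) ↔ y ∉ x • (W / W) := by
  rw [← not_iff_not, not_disjoint_iff, not_not]
  simp only [mem_smul_set, Set.mem_div, smul_eq_mul]
  constructor
  · rintro ⟨_, ⟨w₁, hw₁, rfl⟩, w₂, hw₂, h⟩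
    exact ⟨w₁ / w₂, ⟨w₁, hw₁, w₂, hw₂, rfl⟩, by rw [← mul_div_assoc, ← h, mul_div_cancel_right]⟩
  · rintro ⟨_, ⟨w₁, hw₁, w₂, hw₂, rfl⟩, rfl⟩
    exact ⟨x * w₁, ⟨w₁, hw₁, rfl⟩, w₂, hw₂, by rw [mul_div_assoc', div_mul_cancel]⟩

theorem exists_seq_pairwise_disjoint_smul_of_forall_not_subset {G : Type*} [Group G]
    {E W : Set G} (h : ∀ F : Finset G, ¬E ⊆ F * (W / W)) :
    ∃ a : ℕ → G, (∀ n, a n ∈ E) ∧ Pairwise (Disjoint on fun n ↦ a n • W) := by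
  obtain ⟨a, haE, ha⟩ := exists_seq_of_forall_finset_exists (· ∈ E)
    (fun x y ↦ Disjoint (x • W) (y • W)) fun F _ ↦ by
      obtain ⟨y, hyE, hyF⟩ := not_subset.1 (h F)
      refine ⟨y, hyE, fun x hx ↦ disjoint_smul_set_smul_set_iff.2 fun hy ↦ hyF ?_⟩
      obtain ⟨d, hd, rfl⟩ := hy
      exact mul_mem_mul hx hd
  exact ⟨a, haE, (pairwise_disjoint_on _).2 ha⟩

theorem Pairwise.injective_of_disjoint_smul {ι G : Type*} [Group G] {a : ι → G} {W : Set G}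
    (hW : (1 : G) ∈ W) (ha : Pairwise (Disjoint on fun n ↦ a n • W)) : a.Injective := by
  refine pairwise_ne_iff_injective.1 (ha.mono fun m n h heq ↦ ?_)
  exact disjoint_left.1 h (smul_mem_smul_set hW) (heq ▸ smul_mem_smul_set hW)

theorem left_precompact_or_infinite_uniformly_discrete_general {X : Type*} [Group X]
    [TopologicalSpace X] [IsTopologicalGroup X] (E : Set X) :
    (∀ U ∈ 𝓝 (1 : X), ∃ F : Finset X, E ⊆ ↑F * U) ∨
      (∃ A : Set X, A ⊆ E ∧ A.Countable ∧ A.Infinite ∧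
        ∃ U ∈ 𝓝 (1 : X), ∀ a ∈ A, ∀ b ∈ A, a ≠ b → Disjoint (a • U) (b • U)) := by
  refine or_iff_not_imp_left.2 fun hE ↦ ?_
  push Not at hE
  obtain ⟨U, hU, hEU⟩ := hE
  obtain ⟨W, hW, -, hW_inv, hWU⟩ := exists_closed_nhds_one_inv_eq_mul_subset hU
  have hWW : W / W ⊆ U := by rwa [div_eq_mul_inv, hW_inv]
  obtain ⟨a, haE, ha⟩ := exists_seq_pairwise_disjoint_smul_of_forall_not_subset
    fun F hF ↦ hEU F (hF.trans (mul_subset_mul_left hWW))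
  refine ⟨range a, range_subset_iff.2 haE, countable_range a,
    infinite_range_of_injective (ha.injective_of_disjoint_smul (mem_of_mem_nhds hW)), W, hW, ?_⟩
  rintro _ ⟨m, rfl⟩ _ ⟨n, rfl⟩ hmn
  exact ha (ne_of_apply_ne a hmn)

/-- Let `E` be an infinite subset of a topological group `X`. Then either `E` is left
precompact (for every neighborhood `U` of the identity there is a finite set `F ⊆ X` with
`E ⊆ F·U`), or `E` contains a countably infinite left uniformly discrete subset, i.e. a
countably infinite subset `A` that is left `U`-separated (`aU ∩ bU = ∅` for distinct
`a, b ∈ A`) for some neighborhood `U` of the identity. -/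
theorem left_precompact_or_infinite_uniformly_discrete {X : Type*} [Group X]
    [TopologicalSpace X] [IsTopologicalGroup X] (E : Set X) (hE : E.Infinite) :
    (∀ U ∈ 𝓝 (1 : X), ∃ F : Finset X, E ⊆ ↑F * U) ∨
      (∃ A : Set X, A ⊆ E ∧ A.Countable ∧ A.Infinite ∧
        ∃ U ∈ 𝓝 (1 : X), ∀ a ∈ A, ∀ b ∈ A, a ≠ b → Disjoint (a • U) (b • U)) :=
  left_precompact_or_infinite_uniformly_discrete_general E
end

section
/- Let A be a left uniformly discrete subset of a topological group X. Then A is functionally bounded in X if and only if A is finite. -/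
open Filter Topology Set Pointwise

/-- A subset `E` of a topological space `Y` is functionally bounded in `Y` if every
continuous real-valued function on `Y` is bounded on `E`. -/
def FunctionallyBounded {Y : Type*} [TopologicalSpace Y] (E : Set Y) : Prop :=
  ∀ f : Y → ℝ, Continuous f → Bornology.IsBounded (f '' E)

/-!
Translates `a • W` of a small neighbourhood `W` of `1` by the points of a left `U`-separated set
form a locally finite family. Placing a bump function of height `n` on the `n`-th translate for
a sequence of distinct points of an infinite such set therefore gives a continuous function
that is unbounded on it. Bump functions exist because a topological group is uniformizable,
hence completely regular.
-/

open Function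

instance IsTopologicalGroup.toCompletelyRegularSpace {X : Type*} [Group X] [TopologicalSpace X]
    [IsTopologicalGroup X] : CompletelyRegularSpace X :=
  let _ := IsTopologicalGroup.rightUniformSpace X
  inferInstance

theorem CompletelyRegularSpace.exists_continuous_support_subset {Y : Type*} [TopologicalSpace Y]
    [CompletelyRegularSpace Y] {x : Y} {U : Set Y} (hU : U ∈ 𝓝 x) :
    ∃ φ : Y → ℝ, Continuous φ ∧ φ x = 1 ∧ support φ ⊆ U := by
  obtain ⟨f, hf, hfx, hf1⟩ := CompletelyRegularSpace.completely_regular_isOpen x (interior U)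
    isOpen_interior (mem_interior_iff_mem_nhds.2 hU)
  refine ⟨fun y => 1 - f y, continuous_const.sub (continuous_subtype_val.comp hf), by simp [hfx],
    fun y hy => interior_subset ?_⟩
  by_contra hyU
  exact hy (by simp [hf1 hyU])

theorem not_functionallyBounded_of_locallyFinite {Y : Type*} [TopologicalSpace Y] {E : Set Y}
    (x : ℕ → Y) (hxE : ∀ n, x n ∈ E) (φ : ℕ → Y → ℝ) (hφ : ∀ n, Continuous (φ n))
    (hlf : LocallyFinite fun n => support (φ n)) (hφ_self : ∀ n, φ n (x n) = 1)
    (hφ_ne : ∀ m n, m ≠ n → φ n (x m) = 0) : ¬FunctionallyBounded E := by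
  intro hE
  set F : Y → ℝ := fun y => ∑ᶠ n : ℕ, (n : ℝ) * φ n y
  have hF : Continuous F := continuous_finsum (fun n => continuous_const.mul (hφ n))
    (hlf.subset fun n => support_mul_subset_right (fun _ => (n : ℝ)) (φ n))
  have hFx : ∀ k, F (x k) = k := fun k => calc
    F (x k) = k * φ k (x k) := finsum_eq_single _ k fun n hn => by rw [hφ_ne k n hn.symm, mul_zero]
    _ = k := by rw [hφ_self, mul_one]
  obtain ⟨C, hC⟩ := isBounded_iff_forall_norm_le.1 (hE F hF)
  obtain ⟨k, hk⟩ := exists_nat_gt C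
  have hFk := hC _ (mem_image_of_mem F (hxE k))
  rw [hFx, Real.norm_natCast] at hFk
  linarith

theorem locallyFinite_smul_of_pairwise_disjoint_smul {X ι : Type*} [Group X] [TopologicalSpace X]
    [ContinuousConstSMul X X] {a : ι → X} {U W : Set X} (hW : W ∈ 𝓝 1) (hWU : W * W⁻¹ ⊆ U)
    (hdisj : Pairwise (Disjoint on fun i => a i • U)) : LocallyFinite fun i => a i • W := by
  intro x
  refine ⟨x • W, smul_mem_nhds_self.2 hW, Subsingleton.finite fun i hi j hj => ?_⟩
  -- `a i • W` meeting `x • W` puts `x` in `a i • (W * W⁻¹) ⊆ a i • U`.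
  have hx_mem : ∀ i, (a i • W ∩ x • W).Nonempty → x ∈ a i • U := by
    rintro i ⟨_, ⟨w, hw, rfl⟩, ⟨v, hv, hvw⟩⟩
    refine ⟨w * v⁻¹, hWU (mul_mem_mul hw (inv_mem_inv.2 hv)), ?_⟩
    simp only [smul_eq_mul] at hvw ⊢
    rw [← mul_assoc, ← hvw, mul_inv_cancel_right]
  by_contra hij
  exact disjoint_left.1 (hdisj hij) (hx_mem i hi) (hx_mem j hj)

/-- Let `A` be a left uniformly discrete subset of a topological group `X`, i.e. `A` is left
`U`-separated (`aU ∩ bU = ∅` for all distinct `a, b ∈ A`) for some neighborhood `U` of the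
identity. Then `A` is functionally bounded in `X` if and only if `A` is finite. -/
theorem functionallyBounded_iff_finite_of_uniformly_discrete {X : Type*} [Group X]
    [TopologicalSpace X] [IsTopologicalGroup X] (A U : Set X) (hU : U ∈ 𝓝 (1 : X))
    (hsep : ∀ a ∈ A, ∀ b ∈ A, a ≠ b → Disjoint (a • U) (b • U)) :
    FunctionallyBounded A ↔ A.Finite := by
  refine ⟨fun hA => ?_, fun hA f _ => (hA.image f).isBounded⟩
  by_contra hinf
  obtain ⟨W, hW, -, hW_inv, hWU⟩ := exists_closed_nhds_one_inv_eq_mul_subset hU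
  have hW_sub : W ⊆ U := (subset_mul_left W (mem_of_mem_nhds hW)).trans hWU
  obtain ⟨φ, hφ, hφ1, hφ_supp⟩ := CompletelyRegularSpace.exists_continuous_support_subset hW
  let e := Set.Infinite.natEmbedding A hinf
  set a : ℕ → X := fun n => e n
  have hdisj : Pairwise (Disjoint on fun n => a n • U) := fun m n hmn =>
    hsep _ (e m).2 _ (e n).2 fun h => hmn (e.injective (Subtype.ext h))
  have ha_mem : ∀ n, a n ∈ a n • U := fun n => ⟨1, mem_of_mem_nhds hU, mul_one _⟩
  have hsupp : ∀ n, support (fun y => φ ((a n)⁻¹ • y)) ⊆ a n • W := fun n => by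
    rw [support_comp_inv_smul]
    exact smul_set_mono hφ_supp
  refine not_functionallyBounded_of_locallyFinite a (fun n => (e n).2) _
    (fun n => hφ.comp (continuous_const_smul _))
    ((locallyFinite_smul_of_pairwise_disjoint_smul hW (by rwa [hW_inv]) hdisj).subset hsupp)
    (fun n => by simp [hφ1]) (fun m n hmn => notMem_support.1 fun hm =>
      disjoint_left.1 (hdisj hmn) (ha_mem m) (smul_set_mono hW_sub (hsupp n hm))) hA
end

section
/- Every functionally bounded subset E of a topological group X is precompact, i.e., totally bounded: for every neighborhood U of the identity there exists a finite subset F of X with E ⊆ F·U and E ⊆ U·F. -/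
/-!
Use the left and the right uniformity of the group. In any uniform space a set that is not
totally bounded contains a uniformly separated sequence `(xₙ)`; small balls around the `xₙ`
then form a locally finite family, so with bumps `φₙ` supported in them (complete regularity)
`∑ n, n • φₙ` is a continuous function that is unbounded on the set.
-/

open Filter Topology Set Pointwise

open UniformSpace Uniformity SetRel

theorem CompletelyRegularSpace.exists_continuous_eq_one_support_subset {X : Type*}
    [TopologicalSpace X] [CompletelyRegularSpace X] {x : X} {N : Set X} (hN : N ∈ 𝓝 x) :
    ∃ f : X → ℝ, Continuous f ∧ f x = 1 ∧ Function.support f ⊆ N := by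
  obtain ⟨g, hg, hgx, hgN⟩ := CompletelyRegularSpace.completely_regular_isOpen x (interior N)
    isOpen_interior (mem_interior_iff_mem_nhds.2 hN)
  refine ⟨fun y => 1 - g y, by fun_prop, by simp [hgx], fun y hy => interior_subset ?_⟩
  by_contra hyN
  simp [hgN hyN] at hy

section UniformSpace

variable {X ι : Type*} [UniformSpace X]

theorem locallyFinite_ball_of_pairwise_notMem {x : ι → X} {W : SetRel X X} [W.IsSymm]
    (hW : W ∈ 𝓤 X) (hx : Pairwise fun i j => (x i, x j) ∉ (W ○ W) ○ (W ○ W)) :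
    LocallyFinite fun i => ball (x i) W := by
  intro a
  refine ⟨ball a W, ball_mem_nhds a hW, Subsingleton.finite ?_⟩
  rintro i ⟨y, hyi, hya⟩ j ⟨z, hzj, hza⟩
  by_contra hij
  exact hx hij ⟨a, ⟨y, hyi, W.symm hya⟩, ⟨z, hza, W.symm hzj⟩⟩

theorem exists_continuous_comp_eq_of_pairwise_notMem {x : ι → X} {d : SetRel X X}
    (hd : d ∈ 𝓤 X) (hx : Pairwise fun i j => (x i, x j) ∉ d) (c : ι → ℝ) :
    ∃ f : X → ℝ, Continuous f ∧ f ∘ x = c := by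
  obtain ⟨V, hV, _, hVd⟩ := comp_symm_mem_uniformity_sets hd
  obtain ⟨W, hW, _, hWV⟩ := comp_symm_mem_uniformity_sets hV
  have hWd : (W ○ W) ○ (W ○ W) ⊆ d := (comp_subset_comp hWV hWV).trans hVd
  choose φ hφ hφx hφW using fun i =>
    CompletelyRegularSpace.exists_continuous_eq_one_support_subset (ball_mem_nhds (x i) hW)
  have hfin : LocallyFinite fun i => Function.support (fun y => c i * φ i y) :=
    (locallyFinite_ball_of_pairwise_notMem hW fun i j hij h => hx hij (hWd h)).subset
      fun i => (Function.support_mul_subset_right _ _).trans (hφW i)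
  refine ⟨fun y => ∑ᶠ i, c i * φ i y, continuous_finsum (fun i => by fun_prop) hfin, ?_⟩
  funext j
  have hφxj : ∀ i ≠ j, φ i (x j) = 0 := fun i hij => by
    by_contra h
    have hxx := refl_mem_uniformity (x := x j) hW
    exact hx hij (hWd ⟨x j, ⟨x j, hφW i h, hxx⟩, ⟨x j, hxx, hxx⟩⟩)
  rw [Function.comp_apply, finsum_eq_single _ j fun i hij => by simp [hφxj i hij], hφx, mul_one]

theorem exists_seq_pairwise_notMem_of_not_totallyBounded {s : Set X} (hs : ¬TotallyBounded s) :
    ∃ d ∈ 𝓤 X, ∃ x : ℕ → X, (∀ n, x n ∈ s) ∧ Pairwise fun m n => (x m, x n) ∉ d := by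
  simp only [TotallyBounded, not_forall, not_exists, not_and, exists_prop] at hs
  obtain ⟨d, hd, hs⟩ := hs
  obtain ⟨x, hx⟩ := seq_of_forall_finite_exists fun t ht => not_subset.1 (hs t ht)
  refine ⟨symmetrize d, symmetrize_mem_uniformity hd, x, fun n => (hx n).1, fun m n hmn h => ?_⟩
  rcases hmn.lt_or_gt with hlt | hlt
  · exact (hx n).2 (mem_biUnion (mem_image_of_mem x hlt) h.2)
  · exact (hx m).2 (mem_biUnion (mem_image_of_mem x hlt) h.1)

theorem FunctionallyBounded.totallyBounded {s : Set X} (hs : FunctionallyBounded s) :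
    TotallyBounded s := by
  by_contra h
  obtain ⟨d, hd, x, hxs, hx⟩ := exists_seq_pairwise_notMem_of_not_totallyBounded h
  obtain ⟨f, hf, hfx⟩ := exists_continuous_comp_eq_of_pairwise_notMem hd hx Nat.cast
  obtain ⟨C, hC⟩ := (hs f hf).exists_norm_le
  obtain ⟨n, hn⟩ := exists_nat_gt C
  have hfn : ‖f (x n)‖ ≤ C := hC _ (mem_image_of_mem f (hxs n))
  rw [← Function.comp_apply (f := f), hfx, Real.norm_natCast] at hfn
  linarith

end UniformSpace

section Group

variable {G : Type*} [Group G] [UniformSpace G] {s U : Set G}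

theorem TotallyBounded.exists_finset_subset_finset_mul [IsLeftUniformGroup G]
    (hs : TotallyBounded s) (hU : U ∈ 𝓝 (1 : G)) : ∃ F : Finset G, s ⊆ F * U := by
  have hd : (fun p : G × G => p.1⁻¹ * p.2) ⁻¹' U⁻¹ ∈ 𝓤 G := by
    rw [uniformity_eq_comap_inv_mul_nhds_one]
    exact preimage_mem_comap (inv_mem_nhds_one G hU)
  obtain ⟨t, ht, hst⟩ := hs _ hd
  refine ⟨ht.toFinset, fun a ha => ?_⟩
  obtain ⟨y, hy, hay⟩ := mem_iUnion₂.1 (hst ha)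
  exact ⟨y, ht.mem_toFinset.2 hy, y⁻¹ * a, by simpa using hay, mul_inv_cancel_left y a⟩

theorem TotallyBounded.exists_finset_subset_mul_finset [IsRightUniformGroup G]
    (hs : TotallyBounded s) (hU : U ∈ 𝓝 (1 : G)) : ∃ F : Finset G, s ⊆ U * F := by
  have hd : (fun p : G × G => p.2 * p.1⁻¹) ⁻¹' U⁻¹ ∈ 𝓤 G := by
    rw [uniformity_eq_comap_mul_inv_nhds_one]
    exact preimage_mem_comap (inv_mem_nhds_one G hU)
  obtain ⟨t, ht, hst⟩ := hs _ hd
  refine ⟨ht.toFinset, fun a ha => ?_⟩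
  obtain ⟨y, hy, hay⟩ := mem_iUnion₂.1 (hst ha)
  exact ⟨a * y⁻¹, by simpa using hay, y, ht.mem_toFinset.2 hy, inv_mul_cancel_right a y⟩

end Group

/-- Every functionally bounded subset `E` of a topological group `X` is precompact, i.e.
totally bounded: for every neighborhood `U` of the identity there exists a finite subset `F`
of `X` with `E ⊆ F·U` and `E ⊆ U·F`. -/
theorem precompact_of_functionallyBounded {X : Type*} [Group X] [TopologicalSpace X]
    [IsTopologicalGroup X] (E : Set X) (hE : FunctionallyBounded E) :
    ∀ U ∈ 𝓝 (1 : X), ∃ F : Finset X, E ⊆ ↑F * U ∧ E ⊆ U * ↑F := by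
  classical
  intro U hU
  obtain ⟨F₁, hF₁⟩ : ∃ F : Finset X, E ⊆ F * U := by
    let := IsTopologicalGroup.leftUniformSpace X
    have : IsLeftUniformGroup X := ⟨rfl⟩
    exact hE.totallyBounded.exists_finset_subset_finset_mul hU
  obtain ⟨F₂, hF₂⟩ : ∃ F : Finset X, E ⊆ U * F := by
    let := IsTopologicalGroup.rightUniformSpace X
    have : IsRightUniformGroup X := ⟨rfl⟩
    exact hE.totallyBounded.exists_finset_subset_mul_finset hU
  refine ⟨F₁ ∪ F₂, hF₁.trans (mul_subset_mul_right ?_), hF₂.trans (mul_subset_mul_left ?_)⟩ <;>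
    simp
end

section
/- Let E be a subset of a topological group X that is complete with respect to its two-sided (Raĭkov) uniformity. Then the following are equivalent: (i) E is functionally bounded in X; (ii) E is precompact (totally bounded); (iii) the closure of E in X is compact. -/
open Filter Topology Set Pointwise

/-- A topological group is Raĭkov complete if every nontrivial filter that is Cauchy with
respect to the two-sided uniformity (i.e. for every neighborhood `V` of the identity it
contains a set `S` with `y * x⁻¹ ∈ V` and `x⁻¹ * y ∈ V` for all `x, y ∈ S`) converges. -/
def RaikovComplete (X : Type*) [Group X] [TopologicalSpace X] : Prop :=
  ∀ F : Filter X, F.NeBot →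
    (∀ V ∈ 𝓝 (1 : X), ∃ S ∈ F, ∀ x ∈ S, ∀ y ∈ S, y * x⁻¹ ∈ V ∧ x⁻¹ * y ∈ V) →
    ∃ x : X, F ≤ 𝓝 x

/-!
A functionally bounded set `E` is precompact: otherwise a greedy choice gives a sequence `x n ∈ E`
with `(x m)⁻¹ * x n ∉ U` for `m < n`, the translates `x n • V` by a small neighbourhood `V` of
the identity form a locally finite family, and the sum of the bumps at `x n` supported in
`x n • V`, weighted by `n`, is a continuous function that is unbounded on `E`. Conversely, the
closure of a precompact set is precompact, so every ultrafilter on it is Cauchy for the two-sided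
uniformity and converges by Raĭkov completeness.
-/

section FunctionallyBounded

variable {Y : Type*} [TopologicalSpace Y]

theorem FunctionallyBounded.subset {E F : Set Y} (hE : FunctionallyBounded E) (hFE : F ⊆ E) :
    FunctionallyBounded F :=
  fun f hf => (hE f hf).subset (image_mono hFE)

theorem FunctionallyBounded.image {Z : Type*} [TopologicalSpace Z] {E : Set Y}
    (hE : FunctionallyBounded E) {φ : Y → Z} (hφ : Continuous φ) :
    FunctionallyBounded (φ '' E) := fun f hf => by
  rw [← image_comp]
  exact hE _ (hf.comp hφ)

theorem IsCompact.functionallyBounded {K : Set Y} (hK : IsCompact K) : FunctionallyBounded K :=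
  fun _ hf => (hK.image hf).isBounded

theorem exists_continuous_nonneg_eq_one_support_subset [CompletelyRegularSpace Y] {y : Y}
    {s : Set Y} (hs : s ∈ 𝓝 y) :
    ∃ g : Y → ℝ, Continuous g ∧ g y = 1 ∧ 0 ≤ g ∧ Function.support g ⊆ s := by
  obtain ⟨f, hf, hfy, hfK⟩ := CompletelyRegularSpace.completely_regular_isOpen y (interior s)
    isOpen_interior (mem_interior_iff_mem_nhds.2 hs)
  refine ⟨fun x => 1 - f x, by fun_prop, by simp [hfy], fun x => by simpa using (f x).2.2,
    fun x hx => interior_subset (not_not.1 fun h => hx ?_)⟩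
  simp [hfK h]

theorem not_functionallyBounded_of_locallyFinite_s7 [CompletelyRegularSpace Y] {E : Set Y}
    {y : ℕ → Y} {s : ℕ → Set Y} (hyE : ∀ n, y n ∈ E) (hys : ∀ n, s n ∈ 𝓝 (y n))
    (hs : LocallyFinite s) : ¬ FunctionallyBounded E := by
  intro hE
  choose g hg hgy hg0 hgs using fun n : ℕ => exists_continuous_nonneg_eq_one_support_subset (hys n)
  have hlf : LocallyFinite fun n : ℕ => Function.support fun x => (n : ℝ) * g n x :=
    hs.subset fun n => (Function.support_mul_subset_right _ _).trans (hgs n)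
  set f : Y → ℝ := fun x => ∑ᶠ n : ℕ, (n : ℝ) * g n x
  have hf : Continuous f := continuous_finsum (fun n => continuous_const.mul (hg n)) hlf
  have hfy : ∀ n : ℕ, (n : ℝ) ≤ f (y n) := fun n => by
    simpa [hgy] using single_le_finsum n (hlf.point_finite (y n))
      fun m => mul_nonneg m.cast_nonneg (hg0 m _)
  obtain ⟨C, hC⟩ := isBounded_iff_forall_norm_le.1 (hE f hf)
  obtain ⟨n, hn⟩ := exists_nat_gt C
  have := hC _ ⟨y n, hyE n, rfl⟩
  rw [Real.norm_eq_abs] at this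
  linarith [le_abs_self (f (y n)), hfy n]

end FunctionallyBounded

section Group

variable {X : Type*} [Group X]

theorem exists_seq_inv_mul_notMem_of_forall_not_subset_finset_mul {E U : Set X}
    (h : ∀ F : Finset X, ¬ E ⊆ ↑F * U) :
    ∃ x : ℕ → X, (∀ n, x n ∈ E) ∧ ∀ m n, m < n → (x m)⁻¹ * x n ∉ U :=
  exists_seq_of_forall_finset_exists (· ∈ E) (fun a b => a⁻¹ * b ∉ U) fun F _ => by
    obtain ⟨y, hyE, hy⟩ := not_subset.1 (h F)
    exact ⟨y, hyE, fun a ha hU => hy ⟨a, ha, _, hU, mul_inv_cancel_left a y⟩⟩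

variable [TopologicalSpace X] [IsTopologicalGroup X]

theorem exists_locallyFinite_smul_of_inv_mul_notMem {U : Set X} (hU : U ∈ 𝓝 1) {x : ℕ → X}
    (hx : ∀ m n, m < n → (x m)⁻¹ * x n ∉ U) :
    ∃ V ∈ 𝓝 (1 : X), LocallyFinite fun n => x n • V := by
  obtain ⟨W, hW, -, -, hWU⟩ := exists_closed_nhds_one_inv_eq_mul_subset hU
  obtain ⟨V, hV, -, hVinv, hVW⟩ := exists_closed_nhds_one_inv_eq_mul_subset hW
  have hVW' : ∀ v ∈ V, ∀ v' ∈ V, v * v'⁻¹ ∈ W := fun v hv v' hv' =>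
    hVW (mul_mem_mul hv (hVinv ▸ inv_mem_inv.2 hv'))
  have key : ∀ (a : X) m n, (x m • V ∩ a • V).Nonempty → (x n • V ∩ a • V).Nonempty →
      (x m)⁻¹ * x n ∈ U := by
    rintro a m n ⟨_, ⟨v₁, hv₁, rfl⟩, v₂, hv₂, h₁⟩ ⟨_, ⟨v₃, hv₃, rfl⟩, v₄, hv₄, h₂⟩
    have hm : x m = a * v₂ * v₁⁻¹ := eq_mul_inv_of_mul_eq h₁.symm
    have hn : x n = a * v₄ * v₃⁻¹ := eq_mul_inv_of_mul_eq h₂.symm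
    have : (x m)⁻¹ * x n = v₁ * v₂⁻¹ * (v₄ * v₃⁻¹) := by rw [hm, hn]; group
    exact this ▸ hWU (mul_mem_mul (hVW' v₁ hv₁ v₂ hv₂) (hVW' v₄ hv₄ v₃ hv₃))
  refine ⟨V, hV, fun a => ⟨a • V, by simpa using smul_mem_nhds_smul a hV, ?_⟩⟩
  refine Set.Subsingleton.finite fun m hm n hn => ?_
  by_contra hne
  rcases lt_or_gt_of_ne hne with h | h
  exacts [hx m n h (key a m n hm hn), hx n m h (key a n m hn hm)]

theorem FunctionallyBounded.exists_finset_subset_finset_mul {E U : Set X}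
    (hE : FunctionallyBounded E) (hU : U ∈ 𝓝 1) : ∃ F : Finset X, E ⊆ ↑F * U := by
  by_contra! h
  obtain ⟨x, hxE, hx⟩ := exists_seq_inv_mul_notMem_of_forall_not_subset_finset_mul h
  obtain ⟨V, hV, hlf⟩ := exists_locallyFinite_smul_of_inv_mul_notMem hU hx
  -- a topological group is uniformizable, hence completely regular
  let := IsTopologicalGroup.rightUniformSpace X
  exact not_functionallyBounded_of_locallyFinite_s7 hxE
    (fun n => by simpa using smul_mem_nhds_smul (x n) hV) hlf hE

theorem FunctionallyBounded.exists_finset_subset_mul_finset {E U : Set X}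
    (hE : FunctionallyBounded E) (hU : U ∈ 𝓝 1) : ∃ F : Finset X, E ⊆ U * ↑F := by
  classical
  obtain ⟨F, hF⟩ :=
    (hE.image continuous_inv).exists_finset_subset_finset_mul (inv_mem_nhds_one X hU)
  refine ⟨F⁻¹, fun e he => ?_⟩
  simpa [mul_inv_rev] using inv_mem_inv.2 (hF (mem_image_of_mem _ he))

def IsPrecompact (E : Set X) : Prop :=
  ∀ U ∈ 𝓝 (1 : X), ∃ F : Finset X, E ⊆ ↑F * U ∧ E ⊆ U * ↑F

theorem FunctionallyBounded.isPrecompact {E : Set X} (hE : FunctionallyBounded E) :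
    IsPrecompact E := fun U hU => by
  classical
  obtain ⟨F₁, h₁⟩ := hE.exists_finset_subset_finset_mul hU
  obtain ⟨F₂, h₂⟩ := hE.exists_finset_subset_mul_finset hU
  refine ⟨F₁ ∪ F₂, h₁.trans (mul_subset_mul_right ?_), h₂.trans (mul_subset_mul_left ?_)⟩ <;> simp

theorem IsPrecompact.closure {E : Set X} (hE : IsPrecompact E) : IsPrecompact (closure E) := by
  intro U hU
  obtain ⟨W, hW, -, hWinv, hWU⟩ := exists_closed_nhds_one_inv_eq_mul_subset hU
  have hWsymm : ∀ w ∈ W, w⁻¹ ∈ W := fun w hw => hWinv ▸ inv_mem_inv.2 hw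
  obtain ⟨F, hFl, hFr⟩ := hE W hW
  refine ⟨F, (closure_subset_mul_right_of_mem_nhds_one_of_inv E hW hWsymm).trans ?_,
    (closure_subset_mul_left_of_mem_nhds_one_of_inv E hW hWsymm).trans ?_⟩
  · calc E * W ⊆ F * W * W := mul_subset_mul_right hFl
      _ = F * (W * W) := mul_assoc _ _ _
      _ ⊆ F * U := mul_subset_mul_left hWU
  · calc W * E ⊆ W * (W * F) := mul_subset_mul_left hFr
      _ = W * W * F := (mul_assoc _ _ _).symm
      _ ⊆ U * F := mul_subset_mul_right hWU

theorem IsPrecompact.exists_small_mem_ultrafilter {E : Set X} (hE : IsPrecompact E)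
    {G : Ultrafilter X} (hEG : E ∈ G) {V : Set X} (hV : V ∈ 𝓝 1) :
    ∃ S ∈ G, ∀ x ∈ S, ∀ y ∈ S, y * x⁻¹ ∈ V ∧ x⁻¹ * y ∈ V := by
  obtain ⟨W, hW, -, hWinv, hWV⟩ := exists_closed_nhds_one_inv_eq_mul_subset hV
  obtain ⟨F, hFl, hFr⟩ := hE W hW
  obtain ⟨f, -, hf⟩ := (Ultrafilter.finite_biUnion_mem_iff F.finite_toSet).1 <|
    G.mem_of_superset hEG (hFl.trans_eq iUnion_smul_left_image.symm)
  obtain ⟨g, -, hg⟩ := (Ultrafilter.finite_biUnion_mem_iff F.finite_toSet).1 <|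
    G.mem_of_superset hEG (hFr.trans_eq (iUnion_op_smul_set W F).symm)
  have hWsymm : ∀ w ∈ W, w⁻¹ ∈ W := fun w hw => hWinv ▸ inv_mem_inv.2 hw
  refine ⟨_, inter_mem hf hg, ?_⟩
  rintro _ ⟨⟨a, ha, rfl⟩, a', ha', hxa⟩ _ ⟨⟨b, hb, rfl⟩, b', hb', hyb⟩
  simp only [smul_eq_mul, MulOpposite.smul_eq_mul_unop, MulOpposite.unop_op] at hxa hyb ⊢
  constructor
  · rw [← hxa, ← hyb, show b' * g * (a' * g)⁻¹ = b' * a'⁻¹ by group]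
    exact hWV (mul_mem_mul hb' (hWsymm a' ha'))
  · rw [show (f * a)⁻¹ * (f * b) = a⁻¹ * b by group]
    exact hWV (mul_mem_mul (hWsymm a ha) hb)

theorem RaikovComplete.isCompact_closure (hX : RaikovComplete X) {E : Set X}
    (hE : IsPrecompact E) : IsCompact (closure E) := by
  refine isCompact_iff_ultrafilter_le_nhds.2 fun G hG => ?_
  rw [le_principal_iff] at hG
  obtain ⟨x, hx⟩ := hX G G.neBot fun V hV => hE.closure.exists_small_mem_ultrafilter hG hV
  exact ⟨x, isClosed_closure.mem_of_tendsto hx hG, hx⟩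

end Group

/-- Let `E` be a subset of a topological group `X` that is complete with respect to its
two-sided (Raĭkov) uniformity. Then the following are equivalent: (i) `E` is functionally
bounded in `X`; (ii) `E` is precompact (totally bounded); (iii) the closure of `E` in `X`
is compact. -/
theorem functionallyBounded_tfae_of_raikovComplete {X : Type*} [Group X] [TopologicalSpace X]
    [IsTopologicalGroup X] (hX : RaikovComplete X) (E : Set X) :
    List.TFAE [FunctionallyBounded E,
      ∀ U ∈ 𝓝 (1 : X), ∃ F : Finset X, E ⊆ ↑F * U ∧ E ⊆ U * ↑F,
      IsCompact (closure E)] := by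
  tfae_have 1 → 2 := FunctionallyBounded.isPrecompact
  tfae_have 2 → 3 := hX.isCompact_closure
  tfae_have 3 → 1 := fun h => h.functionallyBounded.subset subset_closure
  tfae_finish
end

section
/- Let H be an open subgroup of a maximally almost periodic abelian topological group X, and let E be a subset of X that is functionally bounded in X⁺ (X with the weak topology σ(X, X̂)). Then E is contained in a finite union of cosets of H, i.e., there is a finite set F ⊆ X with E ⊆ F + H. -/
/-! Since `H` is open, characters of the discrete group `X ⧸ H` are continuous characters of `X`.
If `E` met infinitely many cosets, pick `e j ∈ E` in distinct cosets and map `X ⧸ H` to a countable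
group `V`, injectively on these cosets. On the compact group of all characters of `V`, the function
`ψ ↦ exp (2πi ψ v)` has Haar integral `0` when `v ≠ 0`, so by dominated convergence no injective
sequence of `V` tends to `0` under every character. A diagonal argument over the countably many
`v ∈ V` gives a subsequence of the `e j` and characters `χ k` of `X` such that each point stays,
under some `χ k`, a fixed distance away from a tail of the subsequence. Bumps around the `e j`
built from `χ 0, …, χ j` then have locally finite supports in `X⁺`, and `∑ j • bump j` is weakly
continuous but unbounded on `E`. -/

open Filter Topology Set Pointwise

/-- The weak (Bohr) topology `σ(X, X̂)` on an abelian topological group `X`: the coarsest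
topology making all continuous characters `X → 𝕋 = ℝ/ℤ` continuous. -/
noncomputable def weakTopology (X : Type*) [AddCommGroup X] [TopologicalSpace X] :
    TopologicalSpace X :=
  ⨅ (χ : X →+ UnitAddCircle) (_ : Continuous χ), TopologicalSpace.induced χ inferInstance

/-- An abelian topological group is maximally almost periodic (MAP) if its continuous
characters separate its points. -/
def MAPGroup (X : Type*) [AddCommGroup X] [TopologicalSpace X] : Prop :=
  ∀ x : X, x ≠ 0 → ∃ χ : X →+ UnitAddCircle, Continuous χ ∧ χ x ≠ 0

/-- A subset `E` of a set carrying a topology `t` is functionally bounded if every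
`t`-continuous real-valued function is bounded on `E`. -/
def FunctionallyBoundedIn {Y : Type*} (t : TopologicalSpace Y) (E : Set Y) : Prop :=
  ∀ f : Y → ℝ, @Continuous Y ℝ t _ f → Bornology.IsBounded (f '' E)

open MeasureTheory

theorem continuous_weakTopology {X : Type*} [AddCommGroup X] [TopologicalSpace X]
    {χ : X →+ UnitAddCircle} (hχ : Continuous χ) : Continuous[weakTopology X, _] χ :=
  continuous_iff_le_induced.2 (iInf₂_le χ hχ)

theorem not_functionallyBoundedIn_of_locallyFinite {Y : Type*} [t : TopologicalSpace Y]
    {E : Set Y} {φ : ℕ → Y → ℝ} (hφ : ∀ j, Continuous (φ j)) (hφ0 : ∀ j y, 0 ≤ φ j y)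
    (hlf : LocallyFinite fun j => Function.support (φ j)) {b : ℕ → Y} (hb : ∀ j, b j ∈ E)
    (hφb : ∀ j, φ j (b j) = 1) : ¬FunctionallyBoundedIn t E := by
  intro hE
  have hf : Continuous fun y => ∑ᶠ j : ℕ, (j : ℝ) * φ j y :=
    continuous_finsum (fun j => continuous_const.mul (hφ j))
      (hlf.subset fun j => Function.support_mul_subset_right _ _)
  obtain ⟨C, hC⟩ := (hE _ hf).bddAbove
  obtain ⟨i, hi⟩ := exists_nat_gt C
  have hle : (i : ℝ) ≤ ∑ᶠ j : ℕ, (j : ℝ) * φ j (b i) := by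
    simpa [hφb] using single_le_finsum (f := fun j : ℕ => (j : ℝ) * φ j (b i)) i
      ((hlf.point_finite (b i)).subset fun j => right_ne_zero_of_mul)
      fun j => mul_nonneg j.cast_nonneg (hφ0 j (b i))
  exact (hle.trans (hC ⟨b i, hb i, rfl⟩)).not_gt hi

theorem not_functionallyBoundedIn_of_eventually_le_dist {Y Z : Type*} [t : TopologicalSpace Y]
    [PseudoMetricSpace Z] {E : Set Y} {χ : ℕ → Y → Z} (hχ : ∀ k, Continuous (χ k)) {b : ℕ → Y}
    (hb : ∀ j, b j ∈ E) (hsep : ∀ y, ∃ k, ∃ ε > 0, ∀ᶠ j in atTop, ε ≤ dist (χ k (b j)) (χ k y)) :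
    ¬FunctionallyBoundedIn t E := by
  let s (j : ℕ) (y : Y) : ℝ := ∑ k ∈ Finset.range (j + 1), dist (χ k y) (χ k (b j))
  have hs_lt {j k : ℕ} {y : Y} (hkj : k ≤ j) (hy : 0 < 1 - (j + 1) * s j y) :
      dist (χ k y) (χ k (b j)) < 1 / (j + 1) := by
    have hk : dist (χ k y) (χ k (b j)) ≤ s j y :=
      Finset.single_le_sum (f := fun k => dist (χ k y) (χ k (b j))) (fun _ _ => dist_nonneg)
        (Finset.mem_range.2 (Nat.lt_succ_of_le hkj))
    rw [lt_div_iff₀ (by positivity)]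
    nlinarith
  refine not_functionallyBoundedIn_of_locallyFinite (φ := fun j y => max 0 (1 - (j + 1) * s j y))
    (fun j => continuous_const.max (continuous_const.sub (continuous_const.mul
      (continuous_finsetSum _ fun k _ => (hχ k).dist continuous_const))))
    (fun j y => le_max_left _ _) (fun y => ?_) hb (fun j => by simp [s])
  obtain ⟨k, ε, hε, hk⟩ := hsep y
  have hsmall : ∀ᶠ j : ℕ in atTop, 1 / ((j : ℝ) + 1) < ε / 2 :=
    tendsto_one_div_add_atTop_nhds_zero_nat.eventually (gt_mem_nhds (half_pos hε))
  obtain ⟨J, hJ⟩ := eventually_atTop.1 ((hk.and hsmall).and (eventually_ge_atTop k))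
  refine ⟨χ k ⁻¹' Metric.ball (χ k y) (ε / 2),
    (hχ k).continuousAt.preimage_mem_nhds (Metric.ball_mem_nhds _ (half_pos hε)),
    (finite_lt_nat J).subset fun j ⟨z, hzφ, hz⟩ => show j < J from lt_of_not_ge fun hJj => ?_⟩
  obtain ⟨⟨hjε, hjsmall⟩, hkj⟩ := hJ j hJj
  have hzb := hs_lt hkj (lt_of_not_ge fun h => hzφ (max_eq_left h))
  have hzy : dist (χ k z) (χ k y) < ε / 2 := hz
  linarith [dist_triangle_left (χ k (b j)) (χ k y) (χ k z)]

theorem exists_addMonoidHom_unitAddCircle_ne_zero {V : Type*} [AddCommGroup V] {v : V}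
    (hv : v ≠ 0) : ∃ ψ : V →+ UnitAddCircle, ψ v ≠ 0 := by
  obtain ⟨c, hc⟩ := CharacterModule.exists_character_apply_ne_zero_of_ne_zero hv
  have hle : AddSubgroup.zmultiples (1 : ℚ) ≤
      (AddSubgroup.zmultiples (1 : ℝ)).comap (Rat.castHom ℝ).toAddMonoidHom := by
    rintro _ ⟨n, rfl⟩
    exact ⟨n, by simp⟩
  let θ : AddCircle (1 : ℚ) →+ UnitAddCircle :=
    QuotientAddGroup.map _ _ (Rat.castHom ℝ).toAddMonoidHom hle
  have hθ : ∀ w, θ w = 0 → w = 0 := by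
    intro w
    induction w using QuotientAddGroup.induction_on with
    | H q =>
      change ((q : ℝ) : UnitAddCircle) = 0 → (q : AddCircle (1 : ℚ)) = 0
      simp only [AddCircle.coe_eq_zero_iff, zsmul_eq_mul, mul_one]
      rintro ⟨n, hn⟩
      exact ⟨n, by exact_mod_cast hn⟩
  exact ⟨θ.comp c, fun h => hc (hθ _ h)⟩

theorem integral_toCircle_addMonoidHom_eq_zero {G : Type*} [AddGroup G] [MeasurableSpace G]
    [MeasurableAdd G] {μ : Measure G} [μ.IsAddLeftInvariant] (χ : G →+ UnitAddCircle) {a : G}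
    (ha : χ a ≠ 0) : ∫ x, (AddCircle.toCircle (χ x) : ℂ) ∂μ = 0 := by
  set c : ℂ := (AddCircle.toCircle (χ a) : ℂ)
  have hc : c ≠ 1 := by
    rw [Ne, Circle.coe_eq_one, ← AddCircle.toCircle_zero]
    exact (AddCircle.injective_toCircle one_ne_zero).ne ha
  have hshift : ∫ x, (AddCircle.toCircle (χ x) : ℂ) ∂μ =
      c * ∫ x, (AddCircle.toCircle (χ x) : ℂ) ∂μ := by
    rw [← integral_const_mul, ← integral_add_left_eq_self _ a]
    simp [c, AddCircle.toCircle_add]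
  have := sub_eq_zero.2 hshift
  rw [← one_sub_mul, mul_eq_zero] at this
  exact this.resolve_left (sub_ne_zero.2 hc.symm)

theorem exists_addMonoidHom_not_tendsto_zero {V ι : Type*} [AddCommGroup V] {l : Filter ι}
    [l.NeBot] [l.IsCountablyGenerated] {γ : ι → V} (hγ : ∀ᶠ i in l, γ i ≠ 0) :
    ∃ ψ : V →+ UnitAddCircle, ¬Tendsto (fun i => ψ (γ i)) l (𝓝 0) := by
  by_contra! h
  let Λ := (AddMonoidHom.coeFn V UnitAddCircle).range
  have : CompactSpace Λ := isCompact_iff_compactSpace.1 <| by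
    rw [AddMonoidHom.coe_range]
    exact (AddMonoidHom.isClosed_range_coe V UnitAddCircle).isCompact
  let _ : MeasurableSpace Λ := borel Λ
  have : BorelSpace Λ := ⟨rfl⟩
  let μ : Measure Λ := Measure.addHaar
  let ev (v : V) : Λ →+ UnitAddCircle :=
    (Pi.evalAddMonoidHom (fun _ => UnitAddCircle) v).comp Λ.subtype
  have hev : ∀ v, Continuous (ev v) := fun v => (continuous_apply v).comp continuous_subtype_val
  have hcircle : Continuous fun z : UnitAddCircle => (AddCircle.toCircle z : ℂ) :=
    continuous_subtype_val.comp AddCircle.continuous_toCircle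
  have hzero : ∀ᶠ i in l, ∫ x, (AddCircle.toCircle (ev (γ i) x) : ℂ) ∂μ = 0 := by
    filter_upwards [hγ] with i hi
    obtain ⟨ψ, hψ⟩ := exists_addMonoidHom_unitAddCircle_ne_zero hi
    exact integral_toCircle_addMonoidHom_eq_zero (ev (γ i)) (a := ⟨ψ, ψ, rfl⟩) hψ
  have hlim : Tendsto (fun i => ∫ x, (AddCircle.toCircle (ev (γ i) x) : ℂ) ∂μ) l
      (𝓝 (∫ _, (1 : ℂ) ∂μ)) := by
    refine tendsto_integral_filter_of_dominated_convergence (fun _ => 1)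
      (.of_forall fun i => ?_) (.of_forall fun i => ae_of_all _ fun x => (Circle.norm_coe _).le)
      (integrable_const 1) (ae_of_all _ ?_)
    · exact (hcircle.comp (hev (γ i))).aestronglyMeasurable
    · rintro ⟨_, ψ, rfl⟩
      show Tendsto (fun i => (AddCircle.toCircle (ψ (γ i)) : ℂ)) l (𝓝 1)
      simpa [Function.comp_def] using (hcircle.tendsto 0).comp (h ψ)
  have := tendsto_nhds_unique hlim (tendsto_const_nhds.congr' (EventuallyEq.symm hzero))
  exact measureReal_univ_ne_zero (by simpa using this)

theorem exists_strictMono_forall_exists_eventually {α : Type*} {P : ℕ → α → ℕ → Prop}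
    (h : ∀ k (s : Set ℕ), s.Infinite → ∃ c, {j ∈ s | P k c j}.Infinite) :
    ∃ d : ℕ → ℕ, StrictMono d ∧ ∀ k, ∃ c, ∀ᶠ j in atTop, P k c (d j) := by
  choose c hc using h
  let S : ℕ → {s : Set ℕ // s.Infinite} := fun k =>
    Nat.rec ⟨univ, infinite_univ⟩ (fun k s => ⟨_, hc k s.1 s.2⟩) k
  have hS : Antitone fun k => (S k).1 := antitone_nat_of_succ_le fun k => sep_subset _ _
  obtain ⟨d, hd, hdS⟩ := extraction_forall_of_frequently fun k =>
    Nat.frequently_atTop_iff_infinite.2 (S k).2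
  exact ⟨d, hd, fun k => ⟨c k (S k).1 (S k).2,
    eventually_atTop.2 ⟨k + 1, fun j hj => (hS hj (hdS j)).2⟩⟩⟩

theorem exists_addMonoidHom_infinite_setOf_le_norm {V : Type*} [AddCommGroup V] {γ : ℕ → V}
    (hγ : Function.Injective γ) (w : V) {s : Set ℕ} (hs : s.Infinite) :
    ∃ ψ : V →+ UnitAddCircle, ∃ ε > 0, {j ∈ s | ε ≤ ‖ψ (γ j) - ψ w‖}.Infinite := by
  have : (atTop ⊓ 𝓟 s).NeBot := frequently_iff_neBot.1 (Nat.frequently_atTop_iff_infinite.2 hs)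
  have hne : ∀ᶠ j in atTop ⊓ 𝓟 s, γ j - w ≠ 0 := by
    refine inf_le_left (α := Filter ℕ) ?_
    rw [← Nat.cofinite_eq_atTop]
    filter_upwards [hγ.tendsto_cofinite.eventually (eventually_cofinite_ne w)] with j hj
    exact sub_ne_zero.2 hj
  obtain ⟨ψ, hψ⟩ := exists_addMonoidHom_not_tendsto_zero hne
  simp only [Metric.tendsto_nhds, not_forall, not_eventually, not_lt, dist_zero_right,
    map_sub] at hψ
  obtain ⟨ε, hε, hfreq⟩ := hψ
  refine ⟨ψ, ε, hε, Nat.frequently_atTop_iff_infinite.1 ?_⟩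
  simpa only [frequently_inf_principal, and_comm] using hfreq

theorem exists_addMonoidHom_eventually_le_norm_sub {V : Type*} [AddCommGroup V] [Countable V]
    {γ : ℕ → V} (hγ : Function.Injective γ) :
    ∃ (d : ℕ → ℕ) (ψ : ℕ → V →+ UnitAddCircle),
      ∀ v, ∃ k, ∃ ε > 0, ∀ᶠ j in atTop, ε ≤ ‖ψ k (γ (d j)) - ψ k v‖ := by
  obtain ⟨w, hw⟩ := exists_surjective_nat V
  obtain ⟨d, -, hd⟩ := exists_strictMono_forall_exists_eventually
    (P := fun k (c : (V →+ UnitAddCircle) × ℝ) j => 0 < c.2 ∧ c.2 ≤ ‖c.1 (γ j) - c.1 (w k)‖)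
    fun k s hs => by
      obtain ⟨ψ, ε, hε, hinf⟩ := exists_addMonoidHom_infinite_setOf_le_norm hγ (w k) hs
      exact ⟨(ψ, ε), by simpa [hε] using hinf⟩
  choose c hc using hd
  refine ⟨d, fun k => (c k).1, fun v => ?_⟩
  obtain ⟨k, rfl⟩ := hw v
  obtain ⟨-, hε, -⟩ := (hc k).exists
  exact ⟨k, (c k).2, hε, (hc k).mono fun j hj => hj.2⟩

theorem exists_finset_subset_add_of_finite_image_mk {X : Type*} [AddGroup X] (H : AddSubgroup X)
    {E : Set X} (hE : ((↑) '' E : Set (X ⧸ H)).Finite) : ∃ F : Finset X, E ⊆ ↑F + (H : Set X) := by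
  classical
  refine ⟨hE.toFinset.image Quotient.out, fun x hx => ?_⟩
  have hx' : (x : X ⧸ H) = ((x : X ⧸ H).out : X ⧸ H) := (Quotient.out_eq _).symm
  refine ⟨_, by simpa using ⟨x, hx, rfl⟩, -(x : X ⧸ H).out + x, QuotientAddGroup.eq.1 hx'.symm, ?_⟩
  simp

universe u

theorem exists_countable_addMonoidHom_injOn {G : Type u} [AddCommGroup G] {S : Set G}
    (hS : S.Countable) :
    ∃ (V : Type u) (_ : AddCommGroup V) (_ : Countable V) (ρ : G →+ V), S.InjOn ρ := by
  have : Countable S := hS.to_subtype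
  let f : FreeAbelianGroup S →+ G := FreeAbelianGroup.lift (↑)
  let ι : FreeAbelianGroup S →+ (S →₀ ℚ) :=
    (Finsupp.mapRange.addMonoidHom (Int.castAddHom ℚ)).comp FreeAbelianGroup.toFinsupp
  have hι : Function.Injective ι :=
    (Finsupp.mapRange_injective _ Int.cast_zero Int.cast_injective).comp
      (FreeAbelianGroup.equivFinsupp S).injective
  -- `ιbar` embeds the subgroup generated by `S`, presented as `FreeAbelianGroup S ⧸ f.ker`, into
  -- the divisible group `(S →₀ ℚ) ⧸ K`; Baer's criterion extends it to `G`.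
  let K : AddSubgroup (S →₀ ℚ) := f.ker.map ι
  have : DivisibleBy ((S →₀ ℚ) ⧸ K) ℤ := divisibleByOfSMulRightSurj _ _ fun {n} hn v => by
    induction v using QuotientAddGroup.induction_on with
    | H x =>
      refine ⟨((n : ℚ)⁻¹ • x : S →₀ ℚ), ?_⟩
      show n • (((n : ℚ)⁻¹ • x : S →₀ ℚ) : (S →₀ ℚ) ⧸ K) = x
      rw [← QuotientAddGroup.mk_zsmul, ← Int.cast_smul_eq_zsmul ℚ, smul_smul,
        mul_inv_cancel₀ (by exact_mod_cast hn), one_smul]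
  let ιbar : FreeAbelianGroup S ⧸ f.ker →+ (S →₀ ℚ) ⧸ K :=
    QuotientAddGroup.map _ _ ι (AddSubgroup.le_comap_map _ _)
  have hιbar : Function.Injective ιbar := by
    rw [injective_iff_map_eq_zero]
    intro a ha
    induction a using QuotientAddGroup.induction_on with
    | H a =>
      rw [QuotientAddGroup.map_mk, QuotientAddGroup.eq_zero_iff] at ha
      obtain ⟨b, hb, hba⟩ := ha
      rwa [QuotientAddGroup.eq_zero_iff, ← hι hba]
  obtain ⟨ρ, hρ⟩ := (Module.Baer.of_divisible _).extension_property_addMonoidHom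
    (QuotientAddGroup.kerLift f) (QuotientAddGroup.kerLift_injective f) ιbar
  refine ⟨_, inferInstance, (QuotientAddGroup.mk'_surjective K).countable, ρ,
    fun s hs t ht hst => ?_⟩
  have hρ_apply (x : S) : ρ x = ιbar (FreeAbelianGroup.of x) := by
    rw [← hρ, AddMonoidHom.comp_apply, QuotientAddGroup.kerLift_mk, FreeAbelianGroup.lift_apply_of]
  have := hιbar ((hρ_apply ⟨s, hs⟩).symm.trans (hst.trans (hρ_apply ⟨t, ht⟩)))
  simpa [f] using congrArg (QuotientAddGroup.kerLift f) this

theorem functionallyBounded_subset_finite_cosets_general {X : Type*} [AddCommGroup X]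
    [TopologicalSpace X] [IsTopologicalAddGroup X] (H : AddSubgroup X)
    (hH : IsOpen (H : Set X)) (E : Set X)
    (hE : FunctionallyBoundedIn (weakTopology X) E) :
    ∃ F : Finset X, E ⊆ ↑F + (H : Set X) := by
  refine exists_finset_subset_add_of_finite_image_mk H (Set.not_infinite.1 fun hinf => ?_)
  let g : ℕ → X ⧸ H := fun n => hinf.natEmbedding _ n
  have hg : Function.Injective g := Subtype.val_injective.comp (hinf.natEmbedding _).injective
  choose e heE hge using fun n => (hinf.natEmbedding _ n).2
  obtain ⟨V, _, _, ρ, hρ⟩ := exists_countable_addMonoidHom_injOn (countable_range g)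
  obtain ⟨d, ψ, hsep⟩ := exists_addMonoidHom_eventually_le_norm_sub (γ := ρ ∘ g)
    fun a b hab => hg (hρ ⟨a, rfl⟩ ⟨b, rfl⟩ hab)
  have := QuotientAddGroup.discreteTopology hH
  let χ (k : ℕ) : X →+ UnitAddCircle := ((ψ k).comp ρ).comp (QuotientAddGroup.mk' H)
  refine not_functionallyBoundedIn_of_eventually_le_dist (t := weakTopology X) (χ := fun k => χ k)
    (fun k => continuous_weakTopology (χ := χ k)
      ((continuous_of_discreteTopology (f := (ψ k).comp ρ)).comp continuous_quot_mk))
    (b := fun j => e (d j)) (fun j => heE _) (fun y => ?_) hE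
  obtain ⟨k, ε, hε, hk⟩ := hsep (ρ y)
  exact ⟨k, ε, hε, hk.mono fun j hj => by simpa [χ, dist_eq_norm, hge] using hj⟩

/-- Let `H` be an open subgroup of a maximally almost periodic abelian topological group `X`,
and let `E` be a subset of `X` that is functionally bounded in `X⁺` (`X` with the weak
topology `σ(X, X̂)`). Then `E` is contained in a finite union of cosets of `H`: there is a
finite set `F ⊆ X` with `E ⊆ F + H`. -/
theorem functionallyBounded_subset_finite_cosets {X : Type*} [AddCommGroup X]
    [TopologicalSpace X] [IsTopologicalAddGroup X] (hMAP : MAPGroup X) (H : AddSubgroup X)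
    (hH : IsOpen (H : Set X)) (E : Set X)
    (hE : FunctionallyBoundedIn (weakTopology X) E) :
    ∃ F : Finset X, E ⊆ ↑F + (H : Set X) :=
  functionallyBounded_subset_finite_cosets_general H hH E hE
end

section
/- Let X be an abelian topological group and let E be a subset of c₀(X). If the sequence of coordinate projections {πₙ(E)}ₙ is not a null-sequence of subsets of X (i.e., there is a neighborhood U of 0 in X with πₙ(E) ⊄ U for infinitely many n), then there exist a neighborhood V of 0 in X and an injective sequence (bₖ) in E such that for all k ≠ m the difference bₘ − bₖ has some coordinate outside V; in particular E contains an infinite uniformly discrete subset of F₀(X). -/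
open Filter Topology Set

open scoped Pointwise

/-- Each new sequence is chosen so that it leaves `U` at a coordinate `ν m` so late that all
earlier sequences, being null, already lie in `V` there. -/
theorem exists_seq_notMem_of_infinite {α X : Type*} [TopologicalSpace X] [Zero X]
    {f : α → ℕ → X} {E : Set α} (hf : ∀ a ∈ E, Tendsto (f a) atTop (𝓝 0)) {U V : Set X}
    (hV : V ∈ 𝓝 0) (hU : {n : ℕ | ¬ (fun a => f a n) '' E ⊆ U}.Infinite) :
    ∃ (b : ℕ → α) (ν : ℕ → ℕ), (∀ k, b k ∈ E) ∧ (∀ k, f (b k) (ν k) ∉ U) ∧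
      ∀ k m, k < m → f (b k) (ν m) ∈ V := by
  have hextend : ∀ s : Finset (α × ℕ), (∀ p ∈ s, p.1 ∈ E ∧ f p.1 p.2 ∉ U) →
      ∃ q : α × ℕ, (q.1 ∈ E ∧ f q.1 q.2 ∉ U) ∧ ∀ p ∈ s, f p.1 q.2 ∈ V := by
    intro s hs
    have hsmall : ∀ᶠ n in atTop, ∀ p ∈ s, f p.1 n ∈ V :=
      (eventually_all_finset s).2 fun p hp => hf p.1 (hs p hp).1 hV
    obtain ⟨N, hN⟩ := eventually_atTop.1 hsmall
    obtain ⟨n, hnU, hNn⟩ := hU.exists_gt N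
    obtain ⟨_, ⟨a, haE, rfl⟩, haU⟩ := not_subset.1 hnU
    exact ⟨(a, n), ⟨haE, haU⟩, hN n hNn.le⟩
  obtain ⟨g, hgP, hgr⟩ := exists_seq_of_forall_finset_exists _ _ hextend
  exact ⟨fun k => (g k).1, fun k => (g k).2, fun k => (hgP k).1, fun k => (hgP k).2, hgr⟩

theorem sub_notMem_of_add_subset {X : Type*} [AddGroup X] {U V : Set X} (hVU : V + V ⊆ U)
    {x y : X} (hx : x ∉ U) (hy : y ∈ V) : x - y ∉ V := fun hxy =>
  hx <| hVU <| by simpa using add_mem_add hxy hy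

theorem exists_pairwise_sub_notMem_of_infinite {α X : Type*} [AddGroup X] [TopologicalSpace X]
    [IsTopologicalAddGroup X] {f : α → ℕ → X} {E : Set α}
    (hf : ∀ a ∈ E, Tendsto (f a) atTop (𝓝 0)) {U : Set X} (hU₀ : U ∈ 𝓝 0)
    (hU : {n : ℕ | ¬ (fun a => f a n) '' E ⊆ U}.Infinite) :
    ∃ V ∈ 𝓝 (0 : X), ∃ b : ℕ → α, (∀ k, b k ∈ E) ∧
      ∀ k m, k ≠ m → ∃ n, f (b m) n - f (b k) n ∉ V := by
  obtain ⟨V, hV, -, hVneg, hVU⟩ := exists_closed_nhds_zero_neg_eq_add_subset hU₀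
  obtain ⟨b, ν, hbE, hbU, hbV⟩ := exists_seq_notMem_of_infinite hf hV hU
  refine ⟨V, hV, b, hbE, fun k m hkm => ?_⟩
  rcases hkm.lt_or_gt with hlt | hlt
  · exact ⟨ν m, sub_notMem_of_add_subset hVU (hbU m) (hbV k m hlt)⟩
  · refine ⟨ν k, fun hmem => sub_notMem_of_add_subset hVU (hbU k) (hbV m k hlt) ?_⟩
    rw [← hVneg, ← neg_sub]
    exact neg_mem_neg.2 hmem

namespace c0

variable {X : Type*} [AddCommGroup X] [TopologicalSpace X] [IsTopologicalAddGroup X]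

theorem setOf_forall_apply_mem_mem_nhds_zero {W : Set X} (hW : W ∈ 𝓝 0) :
    {x : c0 X | ∀ n, (x : ℕ → X) n ∈ W} ∈ 𝓝 (0 : c0 X) := by
  let : UniformSpace X := IsTopologicalAddGroup.rightUniformSpace X
  have : IsUniformAddGroup X := isUniformAddGroup_of_addCommGroup
  rw [show F0Topology X = TopologicalSpace.induced
      (fun x : c0 X => UniformFun.ofFun (x : ℕ → X)) inferInstance from rfl, nhds_induced]
  refine mem_comap.2 ⟨{g | (UniformFun.ofFun ((0 : c0 X) : ℕ → X), g) ∈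
      UniformFun.gen ℕ X {p : X × X | p.2 - p.1 ∈ W}}, ?_, fun x hx n => by simpa using hx n⟩
  refine (UniformFun.hasBasis_nhds ℕ X _).mem_of_mem ?_
  rw [uniformity_eq_comap_nhds_zero X]
  exact preimage_mem_comap hW

theorem exists_nhds_zero_disjoint_image_add {V : Set X} (hV : V ∈ 𝓝 0) :
    ∃ W ∈ 𝓝 (0 : c0 X), ∀ x y : c0 X, (∃ n, (y : ℕ → X) n - (x : ℕ → X) n ∉ V) →
      Disjoint ((x + ·) '' W) ((y + ·) '' W) := by
  obtain ⟨W₀, hW₀, hW₀V⟩ := exists_nhds_half_neg hV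
  refine ⟨_, setOf_forall_apply_mem_mem_nhds_zero hW₀, fun x y ⟨n, hn⟩ => ?_⟩
  rw [disjoint_left]
  rintro _ ⟨w, hw, rfl⟩ ⟨w', hw', hyw⟩
  have hcoord : (y : ℕ → X) n + (w' : ℕ → X) n = (x : ℕ → X) n + (w : ℕ → X) n :=
    congrFun (congrArg Subtype.val hyw) n
  refine hn ?_
  rw [sub_eq_sub_iff_add_eq_add.2 (hcoord.trans (add_comm _ _))]
  exact hW₀V _ (hw n) _ (hw' n)

end c0

/-- Let `X` be an abelian topological group and let `E` be a subset of `c₀(X)`. If the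
sequence of coordinate projections `{πₙ(E)}ₙ` is not a null-sequence of subsets of `X`
(i.e. there is a neighborhood `U` of `0` in `X` with `πₙ(E) ⊄ U` for infinitely many `n`),
then there exist a neighborhood `V` of `0` in `X` and an injective sequence `(bₖ)` in `E`
such that for all `k ≠ m` the difference `bₘ − bₖ` has some coordinate outside `V`; in
particular `E` contains an infinite uniformly discrete subset of `F₀(X)`. -/
theorem infinite_uniformly_discrete_of_not_null_sequence {X : Type*} [AddCommGroup X]
    [TopologicalSpace X] [IsTopologicalAddGroup X] (E : Set (c0 X))
    (h : ∃ U ∈ 𝓝 (0 : X), {n : ℕ | ¬ (fun x : c0 X => (x : ℕ → X) n) '' E ⊆ U}.Infinite) :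
    ∃ V ∈ 𝓝 (0 : X), ∃ b : ℕ → c0 X, Function.Injective b ∧ (∀ k, b k ∈ E) ∧
      (∀ k m : ℕ, k ≠ m → ∃ n : ℕ, ((b m : ℕ → X) n) - ((b k : ℕ → X) n) ∉ V) ∧
      ∃ W ∈ 𝓝 (0 : c0 X), ∀ k m : ℕ, k ≠ m →
        Disjoint ((b k + ·) '' W) ((b m + ·) '' W) := by
  obtain ⟨U, hU₀, hU⟩ := h
  obtain ⟨V, hV, b, hbE, hbsep⟩ :=
    exists_pairwise_sub_notMem_of_infinite (fun x _ => x.2) hU₀ hU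
  have hinj : Function.Injective b := fun k m hkm => by
    by_contra hne
    obtain ⟨n, hn⟩ := hbsep k m hne
    exact hn (by rw [hkm, sub_self]; exact mem_of_mem_nhds hV)
  obtain ⟨W, hW, hWdisj⟩ := c0.exists_nhds_zero_disjoint_image_add hV
  exact ⟨V, hV, b, hinj, hbE, hbsep, W, hW, fun k m hkm => hWdisj _ _ (hbsep k m hkm)⟩
end

section
/- Let X be a maximally almost periodic abelian topological group with the SB-property: every sequence in X that is functionally bounded in X⁺ (X with the weak topology σ(X, X̂)) is functionally bounded in X. Then every subset of X that is functionally bounded in X⁺ is precompact (totally bounded) in X. -/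
open Filter Topology Set Pointwise

/-! If `E` is not precompact, some neighbourhood `U` of `0` yields a sequence in `E` whose
terms are pairwise `U`-apart. Translating a bump function supported in a small neighbourhood
to these points gives a locally finite family, so `x ↦ ∑ₙ n φ (x - u n)` is a continuous
function that is unbounded on the sequence. The sequence is functionally bounded in `X⁺`
(it lies in `E`) but not in `X`, contradicting the SB-property. -/

theorem FunctionallyBoundedIn.mono {Y : Type*} {t : TopologicalSpace Y} {E S : Set Y}
    (hE : FunctionallyBoundedIn t E) (hS : S ⊆ E) : FunctionallyBoundedIn t S :=
  fun f hf => (hE f hf).subset (image_mono hS)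

theorem CompletelyRegularSpace.exists_continuous_one_zero_of_mem_nhds {Y : Type*}
    [TopologicalSpace Y] [CompletelyRegularSpace Y] {y : Y} {W : Set Y} (hW : W ∈ 𝓝 y) :
    ∃ φ : Y → ℝ, Continuous φ ∧ φ y = 1 ∧ ∀ z ∉ W, φ z = 0 := by
  obtain ⟨f, hf, hfy, hf1⟩ := CompletelyRegularSpace.completely_regular_isOpen y (interior W)
    isOpen_interior (mem_interior_iff_mem_nhds.2 hW)
  refine ⟨fun z => 1 - f z, by fun_prop, by simp [hfy], fun z hz => ?_⟩
  simp [hf1 (notMem_subset interior_subset hz)]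

instance IsTopologicalAddGroup.completelyRegularSpace {G : Type*} [AddGroup G]
    [TopologicalSpace G] [IsTopologicalAddGroup G] : CompletelyRegularSpace G :=
  .of_exists_uniformSpace ⟨IsTopologicalAddGroup.rightUniformSpace G, rfl⟩

section TopologicalAddGroup

variable {X : Type*} [AddCommGroup X] [TopologicalSpace X] [IsTopologicalAddGroup X]

theorem exists_mem_nhds_zero_sub_sub_sub_subset {U : Set X} (hU : U ∈ 𝓝 0) :
    ∃ W ∈ 𝓝 (0 : X), W - W - (W - W) ⊆ U := by
  obtain ⟨V, hV, hVU⟩ := exists_nhds_zero_quarter hU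
  refine ⟨V ∩ -V, inter_mem hV (neg_mem_nhds_zero X hV), ?_⟩
  rintro _ ⟨_, ⟨a, ⟨ha, -⟩, b, ⟨-, hb⟩, rfl⟩, _, ⟨c, ⟨-, hc⟩, d, ⟨hd, -⟩, rfl⟩, rfl⟩
  have h := hVU ha hb hc hd
  rwa [show a + -b + -c + d = a - b - (c - d) by abel] at h

theorem locallyFinite_preimage_sub_of_pairwise {ι : Type*} {u : ι → X} {W : Set X}
    (hW : W ∈ 𝓝 0) (hu : Pairwise fun i j => u j - u i ∉ W - W - (W - W)) :
    LocallyFinite fun i => (· - u i) ⁻¹' W := by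
  intro x
  refine ⟨(· - x) ⁻¹' W, (continuous_sub_right x).continuousAt.preimage_mem_nhds
    (by rwa [sub_self]), ?_⟩
  refine Set.Subsingleton.finite ?_
  rintro i ⟨y, hyi, hyx⟩ j ⟨z, hzj, hzx⟩
  by_contra hij
  refine hu hij ⟨_, ⟨z - x, hzx, z - u j, hzj, rfl⟩, _, ⟨y - x, hyx, y - u i, hyi, rfl⟩, ?_⟩
  beta_reduce
  abel

theorem exists_continuous_apply_eq_of_pairwise_sub_notMem {ι : Type*} {u : ι → X}
    {U : Set X} (hU : U ∈ 𝓝 0) (hu : Pairwise fun i j => u j - u i ∉ U) (c : ι → ℝ) :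
    ∃ f : X → ℝ, Continuous f ∧ ∀ i, f (u i) = c i := by
  obtain ⟨W, hW, hWU⟩ := exists_mem_nhds_zero_sub_sub_sub_subset hU
  obtain ⟨φ, hφ, hφ0, hφW⟩ := CompletelyRegularSpace.exists_continuous_one_zero_of_mem_nhds hW
  have hsep : Pairwise fun i j => u j - u i ∉ W - W - (W - W) :=
    fun i j hij h => hu hij (hWU h)
  have h0 : (0 : X) ∈ W := mem_of_mem_nhds hW
  have hWsub : W ⊆ W - W - (W - W) :=
    fun w hw => ⟨w - 0, sub_mem_sub hw h0, 0 - 0, sub_mem_sub h0 h0, by simp⟩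
  have hsupp : ∀ i, (Function.support fun x => c i * φ (x - u i)) ⊆ (· - u i) ⁻¹' W :=
    fun i x hx => by_contra fun hxW => hx (by simp [hφW _ hxW])
  refine ⟨fun x => ∑ᶠ i, c i * φ (x - u i),
    continuous_finsum (fun i => by fun_prop)
      ((locallyFinite_preimage_sub_of_pairwise hW hsep).subset hsupp), fun j => ?_⟩
  dsimp only
  rw [finsum_eq_single _ j fun i hij => by
    simp [hφW _ fun h => hsep hij (hWsub h)]]
  simp [hφ0]

theorem not_functionallyBoundedIn_range_of_pairwise_sub_notMem {u : ℕ → X} {U : Set X}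
    (hU : U ∈ 𝓝 0) (hu : Pairwise fun m n => u n - u m ∉ U) :
    ¬ FunctionallyBoundedIn ‹TopologicalSpace X› (range u) := by
  intro hbdd
  obtain ⟨f, hf, hfu⟩ := exists_continuous_apply_eq_of_pairwise_sub_notMem hU hu (↑)
  obtain ⟨C, hC⟩ := (hbdd f hf).bddAbove
  obtain ⟨n, hn⟩ := exists_nat_gt C
  exact (hC ⟨u n, mem_range_self n, hfu n⟩).not_gt hn

end TopologicalAddGroup

theorem exists_seq_pairwise_sub_notMem_of_forall_not_subset {X : Type*} [AddCommGroup X]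
    {E U : Set X} (h : ∀ F : Finset X, ¬ E ⊆ ↑F + U) :
    ∃ u : ℕ → X, (∀ n, u n ∈ E) ∧ Pairwise fun m n => u n - u m ∉ U ∩ -U := by
  let r : X → X → Prop := fun x y => y - x ∉ U ∩ -U
  have : Std.Symm r := ⟨fun x y hxy h => hxy (by simpa [and_comm] using h)⟩
  refine exists_seq_of_forall_finset_exists' (· ∈ E) r fun F _ => ?_
  obtain ⟨y, hyE, hyF⟩ := not_subset.1 (h F)
  exact ⟨y, hyE, fun x hx hxy => hyF ⟨x, hx, y - x, hxy.1, add_sub_cancel x y⟩⟩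

theorem precompact_of_functionallyBounded_weak_general {X : Type*} [AddCommGroup X]
    [TopologicalSpace X] [IsTopologicalAddGroup X]
    (hSB : ∀ u : ℕ → X, FunctionallyBoundedIn (weakTopology X) (Set.range u) →
      FunctionallyBoundedIn ‹TopologicalSpace X› (Set.range u))
    (E : Set X) (hE : FunctionallyBoundedIn (weakTopology X) E) :
    ∀ U ∈ 𝓝 (0 : X), ∃ F : Finset X, E ⊆ ↑F + U := by
  intro U hU
  by_contra! hE_not
  obtain ⟨u, huE, hu⟩ := exists_seq_pairwise_sub_notMem_of_forall_not_subset hE_not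
  exact not_functionallyBoundedIn_range_of_pairwise_sub_notMem
    (inter_mem hU (neg_mem_nhds_zero X hU)) hu (hSB u (hE.mono (range_subset_iff.2 huE)))

/-- Let `X` be a maximally almost periodic abelian topological group with the SB-property:
every sequence in `X` that is functionally bounded in `X⁺` (`X` with the weak topology
`σ(X, X̂)`) is functionally bounded in `X`. Then every subset of `X` that is functionally
bounded in `X⁺` is precompact (totally bounded) in `X`. -/
theorem precompact_of_functionallyBounded_weak {X : Type*} [AddCommGroup X]
    [TopologicalSpace X] [IsTopologicalAddGroup X] (hMAP : MAPGroup X)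
    (hSB : ∀ u : ℕ → X, FunctionallyBoundedIn (weakTopology X) (Set.range u) →
      FunctionallyBoundedIn ‹TopologicalSpace X› (Set.range u))
    (E : Set X) (hE : FunctionallyBoundedIn (weakTopology X) E) :
    ∀ U ∈ 𝓝 (0 : X), ∃ F : Finset X, E ⊆ ↑F + U :=
  precompact_of_functionallyBounded_weak_general hSB E hE
end

section
/- Let {X_i}_{i ∈ I} be a non-empty family of maximally almost periodic abelian topological groups and let X = ∏_{i ∈ I} X_i with the product topology. Then X has the Schur property if and only if X_i has the Schur property for every i ∈ I. -/
open Filter Topology Set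

/-- An abelian topological group has the Schur property if every sequence converging to `0`
in the weak (Bohr) topology converges to `0` in the original topology. -/
def SchurProperty (X : Type*) [AddCommGroup X] [TopologicalSpace X] : Prop :=
  ∀ u : ℕ → X, Tendsto u atTop (@nhds X (weakTopology X) 0) → Tendsto u atTop (𝓝 0)

/-
A continuous homomorphism composed with a continuous character is again a continuous
character, so continuous homomorphisms preserve Bohr convergence to `0`. Applying this to the
projections `∏ X_i → X_i` and the embeddings `X_i → ∏ X_i` transports Bohr-null sequences both
ways, and convergence in the product topology is coordinatewise convergence.
-/

section WeakTopology

variable {X Y : Type*} [AddCommGroup X] [TopologicalSpace X] [AddCommGroup Y] [TopologicalSpace Y]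

lemma tendsto_weakTopology_zero_iff {α : Type*} {l : Filter α} {u : α → X} :
    Tendsto u l (@nhds X (weakTopology X) 0) ↔
      ∀ χ : X →+ UnitAddCircle, Continuous χ → Tendsto (fun n => χ (u n)) l (𝓝 0) := by
  rw [weakTopology]
  simp only [_root_.nhds_iInf, tendsto_iInf, nhds_induced, tendsto_comap_iff, map_zero]
  rfl

lemma AddMonoidHom.tendsto_weakTopology_zero_comp {α : Type*} {l : Filter α} (f : X →+ Y)
    (hf : Continuous f) {u : α → X} (hu : Tendsto u l (@nhds X (weakTopology X) 0)) :
    Tendsto (fun n => f (u n)) l (@nhds Y (weakTopology Y) 0) :=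
  tendsto_weakTopology_zero_iff.mpr fun χ hχ =>
    tendsto_weakTopology_zero_iff.mp hu (χ.comp f) (hχ.comp hf)

end WeakTopology

section Pi

variable {I : Type*} {X : I → Type*} [∀ i, AddCommGroup (X i)] [∀ i, TopologicalSpace (X i)]

lemma SchurProperty.pi (h : ∀ i, SchurProperty (X i)) : SchurProperty (∀ i, X i) := fun _ hu =>
  tendsto_pi_nhds.mpr fun i =>
    h i _ ((Pi.evalAddMonoidHom X i).tendsto_weakTopology_zero_comp (continuous_apply i) hu)

lemma SchurProperty.of_pi (h : SchurProperty (∀ i, X i)) (i : I) : SchurProperty (X i) := by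
  classical
  intro u hu
  have hsingle : Tendsto (fun n => Pi.single i (u n)) atTop (𝓝 (0 : ∀ i, X i)) :=
    h _ ((AddMonoidHom.single X i).tendsto_weakTopology_zero_comp (continuous_single i) hu)
  simpa using tendsto_pi_nhds.mp hsingle i

end Pi

theorem schur_pi_iff_general {I : Type*} (X : I → Type*)
    [∀ i, AddCommGroup (X i)] [∀ i, TopologicalSpace (X i)] :
    SchurProperty (∀ i, X i) ↔ ∀ i, SchurProperty (X i) :=
  ⟨SchurProperty.of_pi, SchurProperty.pi⟩

/-- Let `{X_i}_{i ∈ I}` be a non-empty family of maximally almost periodic abelian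
topological groups and let `X = ∏_{i ∈ I} X_i` with the product topology. Then `X` has the
Schur property if and only if `X_i` has the Schur property for every `i ∈ I`. -/
theorem schur_pi_iff {I : Type*} [Nonempty I] (X : I → Type*)
    [∀ i, AddCommGroup (X i)] [∀ i, TopologicalSpace (X i)]
    [∀ i, IsTopologicalAddGroup (X i)] (hMAP : ∀ i, MAPGroup (X i)) :
    SchurProperty (∀ i, X i) ↔ ∀ i, SchurProperty (X i) :=
  schur_pi_iff_general X
end
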